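/- arXiv:1508.07644 — 4 statements merged into one kernel-verified Lean document; each statement's English description precedes it below -/
import Mathlib

section
/- For the tacnode singularity O = k[[x,y]]/(y² - x⁴) with normalization Õ = k[[t]] × k[[t]] (via x ↦ (t,t), y ↦ (t²,-t²)), the quotient Õ*/O* is isomorphic to k* ⊕ k⁺, via (f,g) ↦ (f(0)/g(0), f'(0)/f(0) - g'(0)/g(0)), where f' denotes the formal derivative. -/
/-!
STATEMENT 2: For the tacnode O = k[[x,y]]/(y² - x⁴) with normalization
Õ = k[[t]] × k[[t]] (x ↦ (t,t), y ↦ (t²,-t²)), the quotient Õ*/O* is isomorphic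
to k* ⊕ k⁺, via (f,g) ↦ (f(0)/g(0), f'(0)/f(0) - g'(0)/g(0)).

In characteristic 0, the image of O in Õ is the subring of pairs (f,g) with
f(0) = g(0) and f'(0) = g'(0).
-/

open PowerSeries

variable (k : Type*) [Field k] [IsAlgClosed k] [CharZero k]

/-- The tacnode `k[[x,y]]/(y²-x⁴)` as a subring of its normalization
`k[[t]] × k[[t]]`: pairs agreeing to first order. -/
noncomputable def tacnodeSubring : Subring (PowerSeries k × PowerSeries k) where
  carrier := {p | constantCoeff (R := k) p.1 = constantCoeff (R := k) p.2 ∧ coeff (R := k) 1 p.1 = coeff (R := k) 1 p.2}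
  zero_mem' := by simp
  one_mem' := by simp
  add_mem' := by
    rintro a b ⟨ha0, ha1⟩ ⟨hb0, hb1⟩
    constructor <;> simp only [Prod.fst_add, Prod.snd_add, map_add, ha0, ha1, hb0, hb1]
  neg_mem' := by
    rintro a ⟨h0, h1⟩
    constructor <;> simp only [Prod.fst_neg, Prod.snd_neg, map_neg, h0, h1]
  mul_mem' := by
    rintro a b ⟨ha0, ha1⟩ ⟨hb0, hb1⟩
    constructor
    · simp only [Prod.fst_mul, Prod.snd_mul, map_mul, ha0, hb0]
    · simp only [Prod.fst_mul, Prod.snd_mul]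
      rw [coeff_mul, coeff_mul, Finset.Nat.sum_antidiagonal_eq_sum_range_succ_mk,
        Finset.Nat.sum_antidiagonal_eq_sum_range_succ_mk]
      simp [Finset.sum_range_succ, ha0, ha1, hb0, hb1, coeff_zero_eq_constantCoeff]
  
/-- The unit group `O*` of the tacnode as a subgroup of `Õ*`. -/
noncomputable def tacnodeUnits : Subgroup (PowerSeries k × PowerSeries k)ˣ where
  carrier := {u | (u : PowerSeries k × PowerSeries k) ∈ tacnodeSubring k ∧
    ((u⁻¹ : (PowerSeries k × PowerSeries k)ˣ) : PowerSeries k × PowerSeries k) ∈ tacnodeSubring k}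
  one_mem' := ⟨(tacnodeSubring k).one_mem, by simpa using (tacnodeSubring k).one_mem⟩
  mul_mem' := by
    rintro a b ⟨ha1, ha2⟩ ⟨hb1, hb2⟩
    refine ⟨(tacnodeSubring k).mul_mem ha1 hb1, ?_⟩
    rw [mul_inv_rev]
    exact (tacnodeSubring k).mul_mem hb2 ha2
  inv_mem' := by
    rintro a ⟨h1, h2⟩
    exact ⟨h2, by simpa using h1⟩

/-!
The map `u ↦ (u(0), u'(0)/u(0))` is a surjective homomorphism `k⟦t⟧ˣ → kˣ × k⁺`, and two units
have the same image exactly when they agree to first order. Dividing its values on the two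
branches gives a surjection `Õ* → kˣ × k⁺` whose kernel consists of the units agreeing to first
order on both branches, which is `O*`.
-/

namespace PowerSeries

variable {K : Type*} [Field K]

lemma constantCoeff_units_ne_zero (u : K⟦X⟧ˣ) : constantCoeff (u : K⟦X⟧) ≠ 0 :=
  (Units.map (constantCoeff (R := K) : K⟦X⟧ →* K) u).ne_zero

noncomputable def logDerivAtZero : K⟦X⟧ˣ →* Multiplicative K where
  toFun u := .ofAdd (coeff 1 (u : K⟦X⟧) / constantCoeff (u : K⟦X⟧))
  map_one' := by simp
  map_mul' u v := by
    have hu := constantCoeff_units_ne_zero u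
    have hv := constantCoeff_units_ne_zero v
    rw [← ofAdd_add, Units.val_mul, coeff_one_mul, map_mul]
    field_simp

noncomputable def firstOrderJet : K⟦X⟧ˣ →* Kˣ × Multiplicative K :=
  (Units.map (constantCoeff (R := K) : K⟦X⟧ →* K)).prod logDerivAtZero

@[simp]
lemma coe_firstOrderJet_fst (u : K⟦X⟧ˣ) :
    ((firstOrderJet u).1 : K) = constantCoeff (u : K⟦X⟧) := rfl

@[simp]
lemma toAdd_firstOrderJet_snd (u : K⟦X⟧ˣ) :
    (firstOrderJet u).2.toAdd = coeff 1 (u : K⟦X⟧) / constantCoeff (u : K⟦X⟧) := rfl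

lemma firstOrderJet_eq_iff (u v : K⟦X⟧ˣ) : firstOrderJet u = firstOrderJet v ↔
    constantCoeff (u : K⟦X⟧) = constantCoeff (v : K⟦X⟧) ∧
      coeff 1 (u : K⟦X⟧) = coeff 1 (v : K⟦X⟧) := by
  have hv := constantCoeff_units_ne_zero v
  rw [Prod.ext_iff, Units.ext_iff, ← Multiplicative.toAdd.injective.eq_iff,
    coe_firstOrderJet_fst, coe_firstOrderJet_fst, toAdd_firstOrderJet_snd, toAdd_firstOrderJet_snd]
  refine and_congr_right fun h => ?_
  rw [h, div_left_inj' hv]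

lemma firstOrderJet_surjective : Function.Surjective (firstOrderJet (K := K)) := by
  rintro ⟨a, b⟩
  let f : K⟦X⟧ := C (a : K) * (1 + C b.toAdd * X)
  have hf : IsUnit f := by simp [f, isUnit_iff_constantCoeff]
  refine ⟨hf.unit, Prod.ext (Units.ext ?_) (Multiplicative.toAdd.injective ?_)⟩
  · simp [f]
  · simp [f, coeff_C_mul]

noncomputable def firstOrderJetDiv : (K⟦X⟧ × K⟦X⟧)ˣ →* Kˣ × Multiplicative K :=
  divMonoidHom.comp ((firstOrderJet.prodMap firstOrderJet).comp MulEquiv.prodUnits.toMonoidHom)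

lemma coe_firstOrderJetDiv_fst (u : (K⟦X⟧ × K⟦X⟧)ˣ) :
    ((firstOrderJetDiv u).1 : K) = constantCoeff (u : K⟦X⟧ × K⟦X⟧).1 /
      constantCoeff (u : K⟦X⟧ × K⟦X⟧).2 :=
  Units.val_div_eq_div_val _ _

lemma toAdd_firstOrderJetDiv_snd (u : (K⟦X⟧ × K⟦X⟧)ˣ) :
    (firstOrderJetDiv u).2.toAdd =
      coeff 1 (u : K⟦X⟧ × K⟦X⟧).1 / constantCoeff (u : K⟦X⟧ × K⟦X⟧).1 -
        coeff 1 (u : K⟦X⟧ × K⟦X⟧).2 / constantCoeff (u : K⟦X⟧ × K⟦X⟧).2 := rfl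

lemma firstOrderJetDiv_eq_one_iff (u : (K⟦X⟧ × K⟦X⟧)ˣ) : firstOrderJetDiv u = 1 ↔
    constantCoeff (u : K⟦X⟧ × K⟦X⟧).1 = constantCoeff (u : K⟦X⟧ × K⟦X⟧).2 ∧
      coeff 1 (u : K⟦X⟧ × K⟦X⟧).1 = coeff 1 (u : K⟦X⟧ × K⟦X⟧).2 :=
  div_eq_one.trans (firstOrderJet_eq_iff _ _)

lemma firstOrderJetDiv_surjective : Function.Surjective (firstOrderJetDiv (K := K)) := by
  intro y
  obtain ⟨f, rfl⟩ := firstOrderJet_surjective y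
  exact ⟨MulEquiv.prodUnits.symm (f, 1), by simp [firstOrderJetDiv]⟩

lemma ker_firstOrderJetDiv_eq_tacnodeUnits : (firstOrderJetDiv (K := K)).ker = tacnodeUnits K := by
  have hmem (u) : u ∈ (firstOrderJetDiv (K := K)).ker ↔ (u : K⟦X⟧ × K⟦X⟧) ∈ tacnodeSubring K :=
    firstOrderJetDiv_eq_one_iff u
  ext u
  exact ⟨fun h => ⟨(hmem u).mp h, (hmem u⁻¹).mp (inv_mem h)⟩, fun h => (hmem u).mpr h.1⟩

end PowerSeries

/-- Õ*/O* ≅ k* ⊕ k⁺, induced by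
(f,g) ↦ (f(0)/g(0), f'(0)/f(0) - g'(0)/g(0)). -/
theorem tacnode_units_quotient_iso :
    ∃ e : ((PowerSeries k × PowerSeries k)ˣ ⧸ tacnodeUnits k) ≃* kˣ × Multiplicative k,
      ∀ u : (PowerSeries k × PowerSeries k)ˣ,
        (((e (QuotientGroup.mk u)).1 : k) =
          constantCoeff (R := k) (u : PowerSeries k × PowerSeries k).1 /
            constantCoeff (R := k) (u : PowerSeries k × PowerSeries k).2) ∧
        (Multiplicative.toAdd (e (QuotientGroup.mk u)).2 =
          coeff (R := k) 1 (u : PowerSeries k × PowerSeries k).1 /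
            constantCoeff (R := k) (u : PowerSeries k × PowerSeries k).1 -
          coeff (R := k) 1 (u : PowerSeries k × PowerSeries k).2 /
            constantCoeff (R := k) (u : PowerSeries k × PowerSeries k).2) :=
  ⟨(QuotientGroup.quotientMulEquivOfEq ker_firstOrderJetDiv_eq_tacnodeUnits.symm).trans
      (QuotientGroup.quotientKerEquivOfSurjective _ firstOrderJetDiv_surjective),
    fun u => ⟨coe_firstOrderJetDiv_fst u, toAdd_firstOrderJetDiv_snd u⟩⟩
end

section
/- If X is a Gorenstein integral projective curve and D, E are generalized divisors on X with E Cartier, then the natural surjection I_D ⊗ I_E → I_{D+E} is an isomorphism, where I_{D+E} is the subsheaf of K generated by products fg with f a local section of I_D and g a local section of I_E. -/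
open TensorProduct Submodule

section SpanSingleton

variable {R : Type*} [CommSemiring R]

theorem TensorProduct.exists_eq_tmul_of_span_singleton {M N : Type*} [AddCommMonoid M]
    [Module R M] [AddCommMonoid N] [Module R N] (n : N) (t : M ⊗[R] span R {n}) :
    ∃ x : M, t = x ⊗ₜ ⟨n, mem_span_singleton_self n⟩ := by
  induction t using TensorProduct.induction_on with
  | zero => exact ⟨0, (zero_tmul _ _).symm⟩
  | tmul x y =>
    obtain ⟨r, hr⟩ := mem_span_singleton.mp y.2
    refine ⟨r • x, ?_⟩
    rw [smul_tmul]
    congr 1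
    exact Subtype.ext hr.symm
  | add a b ha hb =>
    obtain ⟨x, rfl⟩ := ha
    obtain ⟨y, rfl⟩ := hb
    exact ⟨x + y, (add_tmul _ _ _).symm⟩

variable {A : Type*} [Semiring A] [Algebra R A]

theorem Submodule.mulMap'_span_singleton_injective (M : Submodule R A) {g : A}
    (hg : IsRightRegular g) : Function.Injective (mulMap' M (span R {g})) := by
  intro s t hst
  obtain ⟨x, rfl⟩ := exists_eq_tmul_of_span_singleton g s
  obtain ⟨y, rfl⟩ := exists_eq_tmul_of_span_singleton g t
  have hxy : (x : A) * g = y * g := congrArg Subtype.val hst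
  rw [Subtype.ext (hg hxy)]

theorem Submodule.mulMap'_span_singleton_bijective (M : Submodule R A) {g : A}
    (hg : IsRightRegular g) : Function.Bijective (mulMap' M (span R {g})) :=
  ⟨mulMap'_span_singleton_injective M hg, mulMap'_surjective M _⟩

end SpanSingleton

theorem tensor_with_cartier_is_sum_general
    (R : Type*) [CommRing R]
    (F : Type*) [Field F] [Algebra R F]
    (ID IE : Submodule R F)
    (g : F) (hg : g ≠ 0) (hE : IE = Submodule.span R {g}) :
    Function.Bijective (Submodule.mulMap' ID IE) := by
  subst hE
  exact mulMap'_span_singleton_bijective ID (IsRegular.of_ne_zero hg).right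

theorem tensor_with_cartier_is_sum
    (R : Type*) [CommRing R] [IsDomain R]
    (F : Type*) [Field F] [Algebra R F] [IsFractionRing R F]
    (ID IE : Submodule R F) (hD : ID ≠ ⊥)
    (g : F) (hg : g ≠ 0) (hE : IE = Submodule.span R {g}) :
    Function.Bijective (Submodule.mulMap' ID IE) :=
  tensor_with_cartier_is_sum_general R F ID IE g hg hE
end

section
/- If X is a Gorenstein integral projective curve, then every rank 1 torsion-free sheaf I on X is reflexive: the natural map I → Hom(Hom(I, O_X), O_X) is an isomorphism. -/
/-!
STATEMENT 8: If X is a Gorenstein integral projective curve, then every rank 1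
torsion-free sheaf I on X is reflexive: I → Hom(Hom(I,O_X),O_X) is an
isomorphism (equivalently, D = -(-D) for every generalized divisor D).

Reflexivity is local, so we formalize the statement at a stalk: R is a local
ring of the curve, i.e. a 1-dimensional Noetherian local domain, F is its
fraction field (the function field of X); a rank 1 torsion-free sheaf is
locally a nonzero finitely generated R-submodule I of F, its dual
Hom(I, O_X) is the submodule I⁻¹ = {f ∈ F : f·I ⊆ R}, and reflexivity of I is
I = (I⁻¹)⁻¹.  The Gorenstein condition on a 1-dimensional Noetherian local
domain is that the dualizing module is free, equivalently (Bass) that R has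
Cohen–Macaulay type 1: the R-module m⁻¹/R is simple, i.e. R ⋖ m⁻¹ in the
lattice of R-submodules of F.
-/

variable (R : Type*) [CommRing R] (F : Type*) [Field F] [Algebra R F]

/-- The dual `{f ∈ F : f·I ⊆ R}` of a submodule `I ⊆ F = Frac R`,
i.e. the module of homomorphisms `I → O` as a subsheaf of `K`. -/
def dualSub (I : Submodule R F) : Submodule R F where
  carrier := {f | ∀ x ∈ I, f * x ∈ LinearMap.range (Algebra.linearMap R F)}
  add_mem' := fun {a b} ha hb x hx => by simp only [Set.mem_setOf_eq] at *; simpa [add_mul] using add_mem (ha x hx) (hb x hx)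
  zero_mem' := fun x hx => by simpa using Submodule.zero_mem _

  smul_mem' := fun c f hf x hx => by
    simpa [smul_mul_assoc] using Submodule.smul_mem _ c (hf x hx)

/-!
Write `J⁻¹ = 1 / J` for the dual. If `J ⋖ J'` are submodules of `F`, then `𝔪J' ⊆ J` by
Nakayama, so `J' = J + Rx` and multiplication by `x` embeds the interval `[J'⁻¹, J⁻¹]` into `[R, 𝔪⁻¹]`. Type one, `R ⋖ 𝔪⁻¹`, therefore makes
duality turn covers into weak covers, so dualizing never lengthens a chain of covers.
For `0 ≠ x ∈ I`, the finitely generated `I` satisfies `Rx ⊆ I ⊆ Ry` for some `y`, and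
`Ry/Rx ≅ R/(c)` has finite length; so some chain of covers of length `ℓ` joins `Rx` to `I`.
Dualizing it twice gives a chain of length `≤ ℓ` from `Rx⁻⁻ = Rx` to `I⁻⁻ ⊇ I`, whose part from
`Rx` to `I` has length `ℓ` by Jordan–Hölder; hence `I⁻⁻ = I`.
-/

variable {R F}

section CovChain

variable {α β : Type*}

def CovChain [Preorder α] (a b : α) (n : ℕ) : Prop :=
  ∃ s : RelSeries {(x, y) : α × α | x ⋖ y}, s.head = a ∧ s.last = b ∧ s.length = n

namespace CovChain

section PartialOrder

variable [PartialOrder α] [PartialOrder β] {a b c : α} {m n : ℕ}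

lemma refl (a : α) : CovChain a a 0 :=
  ⟨RelSeries.singleton _ a, rfl, rfl, rfl⟩

lemma _root_.CovBy.covChain (h : a ⋖ b) : CovChain a b 1 :=
  ⟨(RelSeries.singleton _ a).snoc b h, rfl, RelSeries.last_snoc _ _ _, rfl⟩

lemma eq_of_length_eq_zero (h : CovChain a b 0) : a = b := by
  obtain ⟨s, rfl, rfl, hs⟩ := h
  exact congrArg s (Fin.ext (by simp [hs]))

lemma trans (hab : CovChain a b m) (hbc : CovChain b c n) : CovChain a c (m + n) := by
  obtain ⟨s, rfl, rfl, rfl⟩ := hab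
  obtain ⟨t, ht, rfl, rfl⟩ := hbc
  exact ⟨s.smash t ht.symm, by simp, by simp, by simp⟩

lemma exists_of_length_succ (h : CovChain a c (n + 1)) : ∃ b, CovChain a b n ∧ b ⋖ c := by
  obtain ⟨s, rfl, rfl, hs⟩ := h
  have hs0 : s.length ≠ 0 := by omega
  exact ⟨s.eraseLast.last, ⟨s.eraseLast, by simp, rfl, by simp [hs]⟩,
    s.eraseLast_last_rel_last hs0⟩

lemma trans_wcovBy (h : CovChain a b n) (hbc : b ⩿ c) : ∃ m ≤ n + 1, CovChain a c m := by
  rcases hbc.covBy_or_eq with hbc | rfl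
  · exact ⟨n + 1, le_rfl, h.trans hbc.covChain⟩
  · exact ⟨n, n.le_succ, h⟩

lemma _root_.WCovBy.trans_covChain (hab : a ⩿ b) (h : CovChain b c n) :
    ∃ m ≤ n + 1, CovChain a c m := by
  rcases hab.covBy_or_eq with hab | rfl
  · exact ⟨1 + n, by omega, hab.covChain.trans h⟩
  · exact ⟨n, n.le_succ, h⟩

lemma le (h : CovChain a b n) : a ≤ b := by
  induction n generalizing b with
  | zero => exact h.eq_of_length_eq_zero.le
  | succ n ih =>
    obtain ⟨b', hab', hb'b⟩ := h.exists_of_length_succ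
    exact (ih hab').trans hb'b.le

lemma map (f : α → β) (hf : ∀ ⦃x y⦄, x ⋖ y → f x ⋖ f y) (h : CovChain a b n) :
    CovChain (f a) (f b) n := by
  obtain ⟨s, rfl, rfl, rfl⟩ := h
  exact ⟨s.map ⟨f, fun h ↦ hf h⟩, by simp, by simp, rfl⟩

lemma exists_le_reverse_of_wcovBy (d : α → β) (hd : ∀ ⦃x y⦄, x ⋖ y → d y ⩿ d x)
    (h : CovChain a b n) : ∃ m ≤ n, CovChain (d b) (d a) m := by
  induction n generalizing b with
  | zero => exact ⟨0, le_rfl, h.eq_of_length_eq_zero ▸ refl _⟩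
  | succ n ih =>
    obtain ⟨b', hab', hb'b⟩ := h.exists_of_length_succ
    obtain ⟨m, hm, hchain⟩ := ih hab'
    obtain ⟨k, hk, hchain'⟩ := (hd hb'b).trans_covChain hchain
    exact ⟨k, by omega, hchain'⟩

end PartialOrder

section Lattice

variable [Lattice α] {a b c : α} {m n : ℕ}

lemma _root_.CovBy.inf_eq_or_sup_eq (h : a ⋖ b) (c : α) : a ⊓ c = b ⊓ c ∨ a ⊔ c = b ⊔ c := by
  rcases h.eq_or_eq (le_inf h.le le_sup_left) (inf_le_left : b ⊓ (a ⊔ c) ≤ b) with h' | h'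
  · left
    exact le_antisymm (inf_le_inf_right c h.le)
      (le_inf (h' ▸ inf_le_inf_left b le_sup_right) inf_le_right)
  · right
    exact le_antisymm (sup_le_sup_right h.le c) (sup_le (h' ▸ inf_le_right) le_sup_right)

variable [IsModularLattice α]

lemma _root_.CovBy.sup_wcovBy_sup (h : a ⋖ b) (c : α) : a ⊔ c ⩿ b ⊔ c := by
  have hb : (a ⊔ c) ⊔ b = b ⊔ c := by rw [sup_right_comm, sup_eq_right.mpr h.le]
  rw [← hb]
  rcases h.eq_or_eq (le_inf le_sup_left h.le) (inf_le_right : (a ⊔ c) ⊓ b ≤ b) with h' | h'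
  · exact (covBy_sup_of_inf_covBy_right (by rwa [h'])).wcovBy
  · rw [sup_eq_left.mpr (show b ≤ a ⊔ c by rw [← h']; exact inf_le_left)]; exact .refl _

lemma _root_.CovBy.inf_wcovBy_inf (h : a ⋖ b) (c : α) : a ⊓ c ⩿ b ⊓ c :=
  (h.toDual.sup_wcovBy_sup (OrderDual.toDual c)).ofDual

lemma exists_inf_sup (h : CovChain a b n) (c : α) :
    ∃ r t, r + t ≤ n ∧ CovChain (a ⊓ c) (b ⊓ c) r ∧ CovChain (a ⊔ c) (b ⊔ c) t := by
  induction n generalizing b with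
  | zero => exact ⟨0, 0, le_rfl, h.eq_of_length_eq_zero ▸ refl _, h.eq_of_length_eq_zero ▸ refl _⟩
  | succ n ih =>
    obtain ⟨b', hab', hb'b⟩ := h.exists_of_length_succ
    obtain ⟨r, t, hrt, hinf, hsup⟩ := ih hab'
    rcases hb'b.inf_eq_or_sup_eq c with heq | heq
    · obtain ⟨t', ht', hsup'⟩ := hsup.trans_wcovBy (hb'b.sup_wcovBy_sup c)
      exact ⟨r, t', by omega, heq ▸ hinf, hsup'⟩
    · obtain ⟨r', hr', hinf'⟩ := hinf.trans_wcovBy (hb'b.inf_wcovBy_inf c)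
      exact ⟨r', t, by omega, hinf', heq ▸ hsup⟩

lemma exists_split (h : CovChain a b n) (hac : a ≤ c) (hcb : c ≤ b) :
    ∃ r t, r + t ≤ n ∧ CovChain a c r ∧ CovChain c b t := by
  simpa only [inf_eq_left.mpr hac, inf_eq_right.mpr hcb, sup_eq_right.mpr hac,
    sup_eq_left.mpr hcb] using h.exists_inf_sup c

lemma length_unique (h₁ : CovChain a b m) (h₂ : CovChain a b n) : m = n := by
  obtain ⟨s, rfl, rfl, rfl⟩ := h₁
  obtain ⟨t, ht, htl, rfl⟩ := h₂
  exact (CompositionSeries.jordan_holder (X := α) s t ht.symm htl.symm).length_eq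

lemma eq_of_le_of_length_le (hab : CovChain a b m) (hac : CovChain a c n) (hbc : b ≤ c)
    (hnm : n ≤ m) : b = c := by
  obtain ⟨r, t, hrt, hab', hbc'⟩ := hac.exists_split hab.le hbc
  obtain rfl : t = 0 := by have := hab'.length_unique hab; omega
  exact hbc'.eq_of_length_eq_zero

end Lattice

end CovChain

end CovChain

open IsLocalRing

namespace Submodule

variable {A : Type*} [CommRing A] [Algebra R A]

lemma le_one_div_one_div (I : Submodule R A) : I ≤ 1 / (1 / I) :=
  le_div_iff_mul_le.mpr mul_one_div_le_one

lemma div_sup_eq_div_inf_div (K I J : Submodule R A) : K / (I ⊔ J) = K / I ⊓ K / J :=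
  eq_of_forall_le_iff fun L ↦ by simp only [le_div_iff_mul_le, mul_sup, sup_le_iff, le_inf_iff]

lemma one_div_span_singleton (x : A) :
    1 / span R {x} = (1 : Submodule R A).comap (LinearMap.mulRight R x) := by
  ext f
  simp only [mem_div_iff_forall_mul_mem, mem_span_singleton, mem_comap, LinearMap.mulRight_apply]
  refine ⟨fun h ↦ h x ⟨1, one_smul R x⟩, ?_⟩
  rintro h _ ⟨r, rfl⟩
  rw [mul_smul_comm]
  exact smul_mem _ r h

lemma one_div_span_singleton_of_ne_zero {x : F} (hx : x ≠ 0) :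
    1 / span R {x} = span R {x⁻¹} := by
  ext f
  simp only [one_div_span_singleton, mem_comap, LinearMap.mulRight_apply, mem_one,
    mem_span_singleton, Algebra.smul_def]
  refine exists_congr fun r ↦ ?_
  rw [mul_inv_eq_iff_eq_mul₀ hx, eq_comm]

lemma one_div_one_div_span_singleton {x : F} (hx : x ≠ 0) :
    1 / (1 / span R {x}) = span R {x} := by
  rw [one_div_span_singleton_of_ne_zero hx, one_div_span_singleton_of_ne_zero (inv_ne_zero hx),
    inv_inv]

variable {M N : Type*} [AddCommGroup M] [Module R M] [AddCommGroup N] [Module R N]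

lemma sup_span_singleton_eq_of_covBy {P P' : Submodule R M} (h : P ⋖ P') {x : M}
    (hxP' : x ∈ P') (hxP : x ∉ P) : P ⊔ span R {x} = P' :=
  (h.eq_or_eq le_sup_left (sup_le h.le ((span_singleton_le_iff_mem x P').mpr hxP'))).resolve_left
    fun he ↦ hxP (he ▸ mem_sup_right (mem_span_singleton_self x))

lemma maximalIdeal_smul_le_of_covBy [IsLocalRing R] {P P' : Submodule R M} (h : P ⋖ P') :
    maximalIdeal R • P' ≤ P := by
  obtain ⟨x, hxP', hxP⟩ := SetLike.exists_of_lt h.lt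
  have hspan : span R {x} ≤ P' := (span_singleton_le_iff_mem x P').mpr hxP'
  rw [← sup_span_singleton_eq_of_covBy h hxP' hxP, smul_sup]
  refine sup_le smul_le_right ?_
  rcases h.eq_or_eq (le_sup_left : P ≤ P ⊔ maximalIdeal R • span R {x})
    (sup_le h.le (smul_le_right.trans hspan)) with he | he
  · exact he ▸ le_sup_right
  · have : span R {x} ≤ P :=
      le_of_le_smul_of_le_jacobson_bot (fg_span_singleton x) (maximalIdeal_le_jacobson ⊥)
        (he ▸ hspan)
    exact absurd ((span_singleton_le_iff_mem x P).mp this) hxP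

lemma wcovBy_of_eq_inf_comap (φ : M →ₗ[R] N) {X Y : Submodule R M} {P Q : Submodule R N}
    (hPQ : P ⋖ Q) (hY : Y.map φ ≤ Q) (hX : X = Y ⊓ P.comap φ) : X ⩿ Y := by
  refine ⟨hX ▸ inf_le_left, fun Z hXZ hZY ↦ ?_⟩
  rcases hPQ.eq_or_eq (le_sup_right : P ≤ Z.map φ ⊔ P)
    (sup_le ((map_mono hZY.le).trans hY) hPQ.le) with he | he
  · refine hXZ.not_ge (hX ▸ le_inf hZY.le fun f hf ↦ ?_)
    exact he ▸ mem_sup_left (mem_map_of_mem hf)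
  · refine hZY.not_ge fun f hf ↦ ?_
    obtain ⟨_, ⟨g, hg, rfl⟩, p, hp, hfg⟩ := mem_sup.mp (he ▸ hY (mem_map_of_mem hf))
    have hfg' : f - g ∈ X := hX ▸ ⟨sub_mem hf (hZY.le hg), by simpa [← hfg] using hp⟩
    simpa using add_mem (hXZ.le hfg') hg

lemma one_div_wcovBy_one_div_of_covBy [IsLocalRing R]
    (hGor : 1 ⋖ 1 / Submodule.map (Algebra.linearMap R A) (maximalIdeal R))
    {I J : Submodule R A} (h : I ⋖ J) : 1 / J ⩿ 1 / I := by
  obtain ⟨x, hxJ, hxI⟩ := SetLike.exists_of_lt h.lt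
  refine wcovBy_of_eq_inf_comap (LinearMap.mulRight R x) hGor ?_ ?_
  · rintro _ ⟨f, hf, rfl⟩ _ ⟨μ, hμ, rfl⟩
    have hμx : μ • x ∈ I := maximalIdeal_smul_le_of_covBy h (smul_mem_smul hμ hxJ)
    convert hf _ hμx using 1
    simp only [LinearMap.mulRight_apply, Algebra.linearMap_apply, Algebra.smul_def]
    ring
  · rw [← sup_span_singleton_eq_of_covBy h hxJ hxI, div_sup_eq_div_inf_div,
      one_div_span_singleton]

lemma exists_le_span_singleton_of_fg [IsFractionRing R F] {I : Submodule R F} (hI : I.FG) :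
    ∃ y : F, I ≤ R ∙ y := by
  have := (algebraMap R F).domain_nontrivial
  obtain ⟨s, rfl⟩ := hI
  obtain ⟨b, hb⟩ := IsLocalization.exist_integer_multiples_of_finset (nonZeroDivisors R) s
  have hb0 : algebraMap R F b ≠ 0 := IsFractionRing.to_map_ne_zero_of_mem_nonZeroDivisors b.2
  refine ⟨(algebraMap R F b)⁻¹, span_le.mpr fun a ha ↦ ?_⟩
  obtain ⟨c, hc⟩ := hb a ha
  refine mem_span_singleton.mpr ⟨c, ?_⟩
  rw [Algebra.smul_def, hc, Algebra.smul_def]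
  field_simp

end Submodule

open Submodule

lemma Ideal.exists_covChain_span_singleton_top [IsNoetherianRing R] [Ring.KrullDimLE 1 R]
    {c : R} (hc : c ∈ nonZeroDivisors R) : ∃ n, CovChain (Ideal.span {c}) ⊤ n := by
  obtain ⟨s, hs₀, hs₁⟩ :=
    isFiniteLength_iff_exists_compositionSeries.mp (isFiniteLength_quotient_span_singleton R hc)
  have hchain : CovChain (⊥ : Submodule R (R ⧸ Ideal.span {c})) ⊤ s.length := ⟨s, hs₀, hs₁, rfl⟩
  refine ⟨s.length, ?_⟩
  have := hchain.map (Submodule.comap (Submodule.mkQ (Ideal.span {c})))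
    fun _ _ h ↦ comap_covBy_of_surjective (mkQ_surjective _) h
  rwa [Submodule.comap_bot, ker_mkQ, Submodule.comap_top] at this

lemma exists_covChain_span_singleton_of_mem [IsDomain R] [IsNoetherianRing R]
    [Ring.KrullDimLE 1 R] {M : Type*} [AddCommGroup M] [Module R M] [Module.IsTorsionFree R M]
    {x y : M} (hx : x ≠ 0) (hxy : x ∈ R ∙ y) : ∃ n, CovChain (R ∙ x) (R ∙ y) n := by
  obtain ⟨c, rfl⟩ := mem_span_singleton.mp hxy
  have hc : c ≠ 0 := by rintro rfl; simp at hx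
  have hy : y ≠ 0 := by rintro rfl; simp at hx
  obtain ⟨n, hn⟩ := Ideal.exists_covChain_span_singleton_top (mem_nonZeroDivisors_of_ne_zero hc)
  refine ⟨n, ?_⟩
  have := hn.map (map (LinearMap.toSpanSingleton R M y))
    fun _ _ h ↦ map_covBy_of_injective (smul_left_injective R hy) h
  simpa only [Ideal.span, map_span, Set.image_singleton, LinearMap.toSpanSingleton_apply,
    Submodule.map_top, ← LinearMap.span_singleton_eq_range] using this

lemma dualSub_eq_one_div (I : Submodule R F) : dualSub R F I = 1 / I := by
  ext f
  rw [mem_div_iff_forall_mul_mem, one_eq_range]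
  rfl

theorem gorenstein_rank_one_torsion_free_reflexive
    [IsDomain R] [IsNoetherianRing R] [IsLocalRing R]
    [IsFractionRing R F]
    (hdim : ringKrullDim R = 1)
    -- Gorenstein: R is of Cohen–Macaulay type 1, i.e. m⁻¹/R is a simple module:
    (hGor : (LinearMap.range (Algebra.linearMap R F)) ⋖
      dualSub R F (Submodule.map (Algebra.linearMap R F) (IsLocalRing.maximalIdeal R)))
    (I : Submodule R F) (hI : I ≠ ⊥) (hfg : I.FG) :
    dualSub R F (dualSub R F I) = I := by
  have : Ring.KrullDimLE 1 R := Ring.krullDimLE_iff.mpr hdim.le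
  rw [← one_eq_range, dualSub_eq_one_div] at hGor
  rw [dualSub_eq_one_div, dualSub_eq_one_div]
  have hdual : ∀ ⦃J J' : Submodule R F⦄, J ⋖ J' → 1 / J' ⩿ 1 / J :=
    fun _ _ ↦ one_div_wcovBy_one_div_of_covBy hGor
  obtain ⟨y, hIy⟩ := exists_le_span_singleton_of_fg hfg
  obtain ⟨x, hxI, hx0⟩ := exists_mem_ne_zero_of_ne_bot hI
  have hxI' : R ∙ x ≤ I := (span_singleton_le_iff_mem x I).mpr hxI
  obtain ⟨n, hxy⟩ := exists_covChain_span_singleton_of_mem hx0 (hIy hxI)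
  obtain ⟨r, -, -, hxI_chain, -⟩ := hxy.exists_split hxI' hIy
  obtain ⟨m, hm, hdual₁⟩ := hxI_chain.exists_le_reverse_of_wcovBy (1 / ·) hdual
  obtain ⟨k, hk, hdual₂⟩ := hdual₁.exists_le_reverse_of_wcovBy (1 / ·) hdual
  rw [one_div_one_div_span_singleton hx0] at hdual₂
  exact (hxI_chain.eq_of_le_of_length_le hdual₂ (le_one_div_one_div I) (hk.trans hm)).symm
end

section
/- Let X be the projective rational curve of genus 2 obtained by gluing X₁ = Spec k[t³,t⁴,t⁵] and X₂ = Spec k[s] along t = s⁻¹, with unibranch non-Gorenstein singularity p₀ corresponding to the maximal ideal (t³,t⁴,t⁵). Then deg(p₀) = 1 but deg(−p₀) = −2; equivalently, the dual sheaf L(p₀) = Hom(I_{p₀}, O_X) is the submodule of K generated by 1, t, t² on X₁ and by 1 on X₂, and has degree 2. -/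
/-!
STATEMENT 12: Let X be the projective rational genus 2 curve glued from
X₁ = Spec k[t³,t⁴,t⁵] and X₂ = Spec k[s] along t = s⁻¹, with unibranch
non-Gorenstein singularity p₀ given by the maximal ideal m = (t³,t⁴,t⁵).
Then deg(p₀) = 1 but deg(-p₀) = -2: the sheaf L(p₀) = Hom(I_{p₀}, O_X) is the
submodule of K generated by 1, t, t² on X₁ and by 1 on X₂, and it has degree 2.

We work in F = k(t) = `RatFunc k` with T = t.  X is covered by the two affine
charts with coordinate rings O₁ = k[t³,t⁴,t⁵] and O₂ = k[t⁻¹], and a subsheaf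
of K is recorded by its modules of sections over the two charts.  The ideal
sheaf I_{p₀} has sections m over X₁ and O₂ over X₂.  The claims:
(1) {f : f·m ⊆ O₁} = O₁·⟨1,t,t²⟩ and (2) {f : f·O₂ ⊆ O₂} = O₂, computing
L(p₀) on the two charts;
(3) dim_k O₁/m = 1, i.e. deg p₀ = 1 (the colength of I_{p₀} in O_X);
(4) dim_k L(p₀)/O₁ = 2 (the chart X₂ contributing 0 by (2)), i.e.
χ(I_{-p₀}) - χ(O_X) = 2, so deg(-p₀) = -2 and deg L(p₀) = 2 ≠ deg p₀.
-/

open Submodule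

variable (k : Type*) [Field k]

noncomputable abbrev g2T : RatFunc k := RatFunc.X

/-- O₁ = k[t³,t⁴,t⁵], the coordinate ring of the singular chart X₁. -/
noncomputable def g2O1 : Subalgebra k (RatFunc k) :=
  Algebra.adjoin k {g2T k ^ 3, g2T k ^ 4, g2T k ^ 5}

/-- O₂ = k[s] = k[t⁻¹], the coordinate ring of the chart X₂ at infinity. -/
noncomputable def g2O2 : Subalgebra k (RatFunc k) :=
  Algebra.adjoin k {(g2T k)⁻¹}

/-- m = (t³,t⁴,t⁵) ⊆ O₁, the ideal of the singular point p₀. -/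
noncomputable def g2m : Submodule (g2O1 k) (RatFunc k) :=
  Submodule.span (g2O1 k) {g2T k ^ 3, g2T k ^ 4, g2T k ^ 5}

/-- The dual (inverse) module {f ∈ k(t) : f·I ⊆ S} of a module of sections I
over a chart with coordinate ring S; this computes L(D) = Hom(I_D, O_X)
chartwise. -/
noncomputable def g2dual (S : Subalgebra k (RatFunc k)) (I : Submodule S (RatFunc k)) :
    Submodule S (RatFunc k) where
  carrier := {f | ∀ x ∈ I, f * x ∈ S}
  add_mem' := fun {a b} ha hb x hx => by
    simp only [Set.mem_setOf_eq] at *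
    simpa [add_mul] using add_mem (ha x hx) (hb x hx)
  zero_mem' := fun x hx => by simpa using S.zero_mem
  smul_mem' := fun c f hf x hx => by
    simpa [Algebra.smul_def, mul_assoc] using mul_mem c.2 (hf x hx)

/-!
All the modules involved are spanned by monomials `tⁿ`: `O₁` by those with `n ∉ {1, 2}`, `m` by
those with `n ≥ 3`, and `L(p₀)` by all of them, i.e. `L(p₀) = k[t]`. Indeed, if `f·m ⊆ O₁`, then
`g = f t³ ∈ O₁`, and `g t = f t⁴ ∈ O₁` has no `t`-term, so `g` has no constant term; hence
`g ∈ t³ k[t]` and `f ∈ k[t]`. A quotient of monomial spans has dimension the number of missing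
exponents, detected by Laurent coefficients: `{0}` for `O₁/m` and `{1, 2}` for `L(p₀)/O₁`.
-/

open scoped LaurentSeries Pointwise

theorem finrank_quotient_comap_subtype_eq {R V W : Type*} [Ring R] [AddCommGroup V] [Module R V]
    [AddCommGroup W] [Module R W] (P Q : Submodule R V) (φ : V →ₗ[R] W)
    (hφ : ∀ w, ∃ x ∈ P, φ x = w) (hQ : ∀ x ∈ P, x ∈ Q ↔ φ x = 0) :
    Module.finrank R (P ⧸ Q.comap P.subtype) = Module.finrank R W := by
  have hsurj : Function.Surjective (φ ∘ₗ P.subtype) := fun w => by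
    obtain ⟨x, hx, rfl⟩ := hφ w
    exact ⟨⟨x, hx⟩, rfl⟩
  have hker : Q.comap P.subtype = LinearMap.ker (φ ∘ₗ P.subtype) := by
    ext ⟨x, hx⟩
    exact hQ x hx
  exact ((quotEquivOfEq _ _ hker).trans
    ((φ ∘ₗ P.subtype).quotKerEquivOfSurjective hsurj)).finrank_eq

theorem RatFunc.coe_C {F : Type*} [Field F] (r : F) :
    ((RatFunc.C r : RatFunc F) : F⸨X⸩) = HahnSeries.C r := by
  rw [← RatFunc.algebraMap_C, ← IsScalarTower.algebraMap_apply (Polynomial F) (RatFunc F) F⸨X⸩]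
  simp

noncomputable def laurentCoeff (i : ℤ) : RatFunc k →ₗ[k] k where
  toFun f := (f : k⸨X⸩).coeff i
  map_add' f g := by simp
  map_smul' r f := by simp [RatFunc.smul_eq_C_mul, RatFunc.coe_C]

noncomputable def monomialSpan (S : Set ℕ) : Submodule k (RatFunc k) :=
  span k ((g2T k ^ ·) '' S)

section Monomials

variable {k}

theorem laurentCoeff_X_pow (i : ℤ) (n : ℕ) :
    laurentCoeff k i (g2T k ^ n) = if i = n then 1 else 0 := by
  simp [laurentCoeff, HahnSeries.coeff_single]

theorem laurentCoeff_mul_X (f : RatFunc k) (i : ℤ) :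
    laurentCoeff k (i + 1) (f * g2T k) = laurentCoeff k i f := by
  simp [laurentCoeff, HahnSeries.coeff_mul_single_add]

theorem laurentCoeff_linearCombination (l : ℕ →₀ k) (n : ℕ) :
    laurentCoeff k n (Finsupp.linearCombination k (g2T k ^ ·) l) = l n := by
  simp [Finsupp.linearCombination_apply, map_finsuppSum, laurentCoeff_X_pow]

theorem X_pow_mem_monomialSpan {S : Set ℕ} {n : ℕ} (hn : n ∈ S) :
    g2T k ^ n ∈ monomialSpan k S :=
  subset_span ⟨n, hn, rfl⟩

theorem monomialSpan_mono {S T : Set ℕ} (h : S ⊆ T) : monomialSpan k S ≤ monomialSpan k T :=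
  span_mono (Set.image_mono h)

theorem monomialSpan_mul_le (S T : Set ℕ) :
    monomialSpan k S * monomialSpan k T ≤ monomialSpan k (S + T) := by
  rw [monomialSpan, monomialSpan, span_mul_span]
  refine span_mono ?_
  rintro _ ⟨_, ⟨a, ha, rfl⟩, _, ⟨b, hb, rfl⟩, rfl⟩
  exact ⟨a + b, Set.add_mem_add ha hb, pow_add _ _ _⟩

theorem mul_mem_monomialSpan {S T U : Set ℕ} (hU : S + T ⊆ U) {x y : RatFunc k}
    (hx : x ∈ monomialSpan k S) (hy : y ∈ monomialSpan k T) : x * y ∈ monomialSpan k U :=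
  monomialSpan_mono hU (monomialSpan_mul_le S T (mul_mem_mul hx hy))

theorem laurentCoeff_eq_zero_of_mem_monomialSpan {S : Set ℕ} {x : RatFunc k}
    (hx : x ∈ monomialSpan k S) {n : ℕ} (hn : n ∉ S) : laurentCoeff k n x = 0 := by
  refine (span_le (p := LinearMap.ker (laurentCoeff k n)) |>.mpr ?_ hx)
  rintro _ ⟨m, hm, rfl⟩
  simp only [SetLike.mem_coe, LinearMap.mem_ker, laurentCoeff_X_pow, Nat.cast_inj]
  exact if_neg (by rintro rfl; exact hn hm)

theorem mem_monomialSpan_iff {S : Set ℕ} {x : RatFunc k} (hx : x ∈ monomialSpan k Set.univ) :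
    x ∈ monomialSpan k S ↔ ∀ n ∉ S, laurentCoeff k n x = 0 := by
  refine ⟨fun h n hn => laurentCoeff_eq_zero_of_mem_monomialSpan h hn, fun h => ?_⟩
  obtain ⟨l, -, rfl⟩ := (Finsupp.mem_span_image_iff_linearCombination k).mp hx
  refine (Finsupp.mem_span_image_iff_linearCombination k).mpr ⟨l, ?_, rfl⟩
  rw [Finsupp.mem_supported]
  intro n hn
  by_contra hnS
  exact Finsupp.mem_support_iff.mp hn (by simpa [laurentCoeff_linearCombination] using h n hnS)

theorem mul_inv_X_pow_mem_monomialSpan {a : ℕ} {x : RatFunc k}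
    (hx : x ∈ monomialSpan k (Set.Ici a)) : x * (g2T k ^ a)⁻¹ ∈ monomialSpan k Set.univ := by
  refine (span_le (p := (monomialSpan k Set.univ).comap (LinearMap.mulRight k (g2T k ^ a)⁻¹))
    |>.mpr ?_ hx)
  rintro _ ⟨n, hn, rfl⟩
  simp only [SetLike.mem_coe, mem_comap, LinearMap.mulRight_apply]
  rw [← pow_sub₀ _ RatFunc.X_ne_zero hn]
  exact X_pow_mem_monomialSpan (Set.mem_univ _)

theorem finrank_monomialSpan_quotient {S T : Set ℕ} (F : Finset ℕ)
    (hF : (F : Set ℕ) = T \ S) :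
    Module.finrank k (monomialSpan k T ⧸ (monomialSpan k S).comap (monomialSpan k T).subtype) =
      F.card := by
  let φ : RatFunc k →ₗ[k] (F → k) := LinearMap.pi fun n => laurentCoeff k n
  have mem_F : ∀ n, n ∈ F ↔ n ∈ T ∧ n ∉ S := fun n => Set.ext_iff.mp hF n
  rw [finrank_quotient_comap_subtype_eq _ _ φ, Module.finrank_fintype_fun_eq_card,
    Fintype.card_coe]
  · intro w
    refine ⟨∑ n : F, w n • g2T k ^ (n : ℕ),
      sum_mem fun n _ => smul_mem _ _ (X_pow_mem_monomialSpan ((mem_F n).mp n.2).1), ?_⟩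
    ext m
    simp only [φ, LinearMap.pi_apply, map_sum, map_smul, laurentCoeff_X_pow, Nat.cast_inj,
      ← Subtype.ext_iff, smul_eq_mul, mul_ite, mul_one, mul_zero,
      Finset.sum_ite_eq, Finset.mem_univ, if_true]
  · intro x hx
    rw [mem_monomialSpan_iff (monomialSpan_mono (Set.subset_univ T) hx)]
    constructor
    · intro h
      ext ⟨n, hn⟩
      exact h n ((mem_F n).mp hn).2
    · intro h n hnS
      by_cases hnT : n ∈ T
      · exact congr_fun h ⟨n, (mem_F n).mpr ⟨hnT, hnS⟩⟩
      · exact laurentCoeff_eq_zero_of_mem_monomialSpan hx hnT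

end Monomials

section Curve

variable {k}

theorem X_pow_mem_g2O1 {n : ℕ} (hn : 3 ≤ n) : g2T k ^ n ∈ g2O1 k := by
  induction n using Nat.strong_induction_on with
  | _ n ih =>
    by_cases hn6 : n < 6
    · exact Algebra.subset_adjoin (by interval_cases n <;> simp)
    · rw [show n = (n - 3) + 3 by omega, pow_add]
      exact mul_mem (ih _ (by omega) (by omega)) (Algebra.subset_adjoin (by simp))

theorem g2O1_toSubmodule : Subalgebra.toSubmodule (g2O1 k) = monomialSpan k {1, 2}ᶜ := by
  have hadd : ({1, 2}ᶜ + {1, 2}ᶜ : Set ℕ) ⊆ {1, 2}ᶜ := by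
    rintro _ ⟨a, ha, b, hb, rfl⟩
    simp only [Set.mem_compl_iff, Set.mem_insert_iff, Set.mem_singleton_iff] at *
    omega
  let O : Subalgebra k (RatFunc k) := (monomialSpan k {1, 2}ᶜ).toSubalgebra
    (X_pow_mem_monomialSpan (n := 0) (by simp))
    (fun x y hx hy => mul_mem_monomialSpan hadd hx hy)
  apply le_antisymm
  · refine (Algebra.adjoin_le (S := O) ?_ : g2O1 k ≤ O)
    rintro _ (rfl | rfl | rfl) <;> exact X_pow_mem_monomialSpan (by simp)
  · refine span_le.mpr ?_
    rintro _ ⟨n, hn, rfl⟩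
    by_cases h0 : n = 0
    · simp [h0]
    · refine X_pow_mem_g2O1 ?_
      simp only [Set.mem_compl_iff, Set.mem_insert_iff, Set.mem_singleton_iff] at hn
      omega

theorem mem_g2O1_iff {x : RatFunc k} : x ∈ g2O1 k ↔ x ∈ monomialSpan k {1, 2}ᶜ := by
  rw [← g2O1_toSubmodule, Subalgebra.mem_toSubmodule]

theorem restrictScalars_span_g2O1_le {s : Set (RatFunc k)} {T : Set ℕ}
    (hT : {1, 2}ᶜ + T ⊆ T) (hs : s ⊆ monomialSpan k T) :
    (span (g2O1 k) s).restrictScalars k ≤ monomialSpan k T := by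
  intro x hx
  induction hx using span_induction with
  | mem x hx => exact hs hx
  | zero => exact zero_mem _
  | add x y _ _ hx hy => exact add_mem hx hy
  | smul c x _ hx => exact mul_mem_monomialSpan hT (mem_g2O1_iff.mp c.2) hx

theorem g2m_restrictScalars : (g2m k).restrictScalars k = monomialSpan k (Set.Ici 3) := by
  apply le_antisymm
  · refine restrictScalars_span_g2O1_le ?_ ?_
    · rintro _ ⟨a, -, b, hb, rfl⟩
      exact Set.mem_Ici.mpr (le_add_left hb)
    · rintro _ (rfl | rfl | rfl) <;> exact X_pow_mem_monomialSpan (by simp)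
  · refine span_le.mpr ?_
    rintro _ ⟨n, hn, rfl⟩
    by_cases hn6 : n < 6
    · exact subset_span (by simp only [Set.mem_Ici] at hn; interval_cases n <;> simp)
    · have : g2T k ^ n = (⟨_, X_pow_mem_g2O1 (n := n - 3) (by omega)⟩ : g2O1 k) • g2T k ^ 3 := by
        rw [Subalgebra.smul_def, smul_eq_mul, ← pow_add]
        congr 1
        omega
      simp only [SetLike.mem_coe]
      rw [this]
      exact smul_mem _ _ (subset_span (by simp))

theorem restrictScalars_span_one_X_X_sq :
    (span (g2O1 k) {1, g2T k, g2T k ^ 2}).restrictScalars k = monomialSpan k Set.univ := by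
  apply le_antisymm
  · refine restrictScalars_span_g2O1_le (Set.subset_univ _) ?_
    rintro _ (rfl | rfl | rfl)
    · simpa using X_pow_mem_monomialSpan (k := k) (n := 0) (Set.mem_univ _)
    · simpa using X_pow_mem_monomialSpan (k := k) (n := 1) (Set.mem_univ _)
    · exact X_pow_mem_monomialSpan (Set.mem_univ _)
  · refine span_le.mpr ?_
    rintro _ ⟨n, -, rfl⟩
    by_cases hn3 : n < 3
    · exact subset_span (by interval_cases n <;> simp)
    · have : g2T k ^ n = (⟨_, X_pow_mem_g2O1 (n := n) (by omega)⟩ : g2O1 k) • (1 : RatFunc k) := by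
        rw [Subalgebra.smul_def, smul_eq_mul, mul_one]
      simp only [SetLike.mem_coe]
      rw [this]
      exact smul_mem _ _ (subset_span (by simp))

theorem g2dual_span_one (S : Subalgebra k (RatFunc k)) :
    g2dual k S (span S {1}) = span S {1} := by
  have mem_span_one : ∀ x : RatFunc k, x ∈ span S {1} ↔ x ∈ S := fun x => by
    simp [mem_span_singleton, Subalgebra.smul_def]
  ext f
  rw [mem_span_one]
  refine ⟨fun hf => by simpa using hf 1 (subset_span rfl), fun hf x hx => ?_⟩
  exact mul_mem hf ((mem_span_one x).mp hx)

theorem mem_monomialSpan_of_mem_g2dual {f : RatFunc k} (hf : f ∈ g2dual k (g2O1 k) (g2m k)) :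
    f ∈ monomialSpan k Set.univ := by
  have hm : ∀ {n}, 3 ≤ n → g2T k ^ n ∈ g2m k := fun hn => by
    rw [← restrictScalars_mem k, g2m_restrictScalars]
    exact X_pow_mem_monomialSpan hn
  set g := f * g2T k ^ 3
  have hg : g ∈ monomialSpan k {1, 2}ᶜ := mem_g2O1_iff.mp (hf _ (hm le_rfl))
  have hgt : g * g2T k ∈ monomialSpan k {1, 2}ᶜ := by
    rw [mul_assoc, ← pow_succ]
    exact mem_g2O1_iff.mp (hf _ (hm (by norm_num)))
  have hg0 : laurentCoeff k 0 g = 0 := by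
    rw [← laurentCoeff_mul_X, zero_add]
    exact laurentCoeff_eq_zero_of_mem_monomialSpan hgt (n := 1) (by simp)
  have hg3 : g ∈ monomialSpan k (Set.Ici 3) := by
    refine (mem_monomialSpan_iff (monomialSpan_mono (Set.subset_univ _) hg)).mpr fun n hn => ?_
    by_cases h0 : n = 0
    · simpa [h0] using hg0
    · refine laurentCoeff_eq_zero_of_mem_monomialSpan hg ?_
      simp only [Set.mem_Ici, Set.mem_compl_iff, Set.mem_insert_iff, Set.mem_singleton_iff] at hn ⊢
      omega
  simpa [g, mul_assoc, RatFunc.X_ne_zero] using mul_inv_X_pow_mem_monomialSpan hg3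

theorem g2dual_g2m : g2dual k (g2O1 k) (g2m k) = span (g2O1 k) {1, g2T k, g2T k ^ 2} := by
  ext f
  rw [← restrictScalars_mem k (span _ _), restrictScalars_span_one_X_X_sq]
  refine ⟨mem_monomialSpan_of_mem_g2dual, fun hf y hy => mem_g2O1_iff.mpr ?_⟩
  rw [← restrictScalars_mem k, g2m_restrictScalars] at hy
  refine monomialSpan_mono ?_ (mul_mem_monomialSpan (subset_refl _) hf hy)
  rintro _ ⟨a, -, b, hb, rfl⟩
  simp only [Set.mem_Ici] at hb
  simp only [Set.mem_compl_iff, Set.mem_insert_iff, Set.mem_singleton_iff]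
  omega

end Curve

theorem degree_of_dual_of_singular_point :
    -- (1) L(p₀) on X₁ is the O₁-module generated by 1, t, t²:
    g2dual k (g2O1 k) (g2m k) =
      Submodule.span (g2O1 k) {1, g2T k, g2T k ^ 2} ∧
    -- (2) L(p₀) on X₂ is O₂ (the ideal sheaf of p₀ is trivial on X₂):
    g2dual k (g2O2 k) (Submodule.span (g2O2 k) {1}) = Submodule.span (g2O2 k) {1} ∧
    -- (3) deg(p₀) = 1: the colength of m in O₁ is 1:
    Module.finrank k
      (↥(Subalgebra.toSubmodule (g2O1 k)) ⧸
        (Submodule.comap (Subalgebra.toSubmodule (g2O1 k)).subtype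
          ((g2m k).restrictScalars k))) = 1 ∧
    -- (4) deg(L(p₀)) = 2 (so deg(-p₀) = -2 ≠ -deg(p₀)): L(p₀)/O_X has length 2:
    Module.finrank k
      (↥((g2dual k (g2O1 k) (g2m k)).restrictScalars k) ⧸
        (Submodule.comap ((g2dual k (g2O1 k) (g2m k)).restrictScalars k).subtype
          (Subalgebra.toSubmodule (g2O1 k)))) = 2 := by
  refine ⟨g2dual_g2m, g2dual_span_one _, ?_, ?_⟩
  · rw [g2O1_toSubmodule, g2m_restrictScalars, finrank_monomialSpan_quotient {0}]
    · rfl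
    · ext n
      simp only [Finset.coe_singleton, Set.mem_singleton_iff, Set.mem_sdiff, Set.mem_compl_iff,
        Set.mem_insert_iff, Set.mem_Ici]
      omega
  · rw [g2dual_g2m, restrictScalars_span_one_X_X_sq, g2O1_toSubmodule,
      finrank_monomialSpan_quotient {1, 2}]
    · rfl
    · ext n
      simp
end
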